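/- arXiv:1912.02586 — 2 statements merged into one kernel-verified Lean document; each statement's English description precedes it below -/
import Mathlib

section
/- Let H1, H2 be complex Hilbert spaces, T : H1 → H2 a closed densely defined linear operator, and v ∈ H2. Then v lies in the image of T if and only if there exists a constant C ≥ 0 such that |⟨u, v⟩| ≤ C‖T*u‖ for all u in the domain of T*. Moreover in that case one can find u with Tu = v and ‖u‖ ≤ C. -/
open LinearPMap InnerProductSpace

/-! The bound makes `T† w ↦ ⟪v, w⟫` a well-defined functional of norm at most `C` on the range
of `T†`. Hahn–Banach and Riesz represent it as `⟪u, ·⟫` with `‖u‖ ≤ C`, which says that `(u, v)`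
lies in the graph of `T††`; for closed `T` this is the graph of `T`, by taking orthogonal
complements twice in `E × F`. Conversely, `⟪w, T u⟫ = ⟪T† w, u⟫` gives the bound with
`C = ‖u‖`. -/

theorem LinearMap.exists_strongDual_comp_eq_of_norm_le {𝕜 E M : Type*} [RCLike 𝕜]
    [NormedAddCommGroup E] [NormedSpace 𝕜 E] [AddCommGroup M] [Module 𝕜 M]
    (A : M →ₗ[𝕜] E) (φ : M →ₗ[𝕜] 𝕜) {C : ℝ} (hC : 0 ≤ C) (h : ∀ m, ‖φ m‖ ≤ C * ‖A m‖) :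
    ∃ g : StrongDual 𝕜 E, ‖g‖ ≤ C ∧ ∀ m, g (A m) = φ m := by
  have hker : LinearMap.ker A ≤ LinearMap.ker φ := fun m hm =>
    norm_le_zero_iff.mp (by simpa [LinearMap.mem_ker.mp hm] using h m)
  let f : LinearMap.range A →ₗ[𝕜] 𝕜 :=
    ((LinearMap.ker A).liftQ φ hker).comp A.quotKerEquivRange.symm.toLinearMap
  have hf : ∀ m, f ⟨A m, A.mem_range_self m⟩ = φ m := fun m => by
    simp [f, A.quotKerEquivRange_symm_apply_image]
  have hfC : ∀ x, ‖f x‖ ≤ C * ‖x‖ := by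
    rintro ⟨_, m, rfl⟩
    exact (hf m).symm ▸ h m
  obtain ⟨g, hg, hg_norm⟩ := exists_extension_norm_eq _ (f.mkContinuous C hfC)
  exact ⟨g, hg_norm.le.trans (f.mkContinuous_norm_le hC hfC), fun m => (hg _).trans (hf m)⟩

section

variable {𝕜 E F M : Type*} [RCLike 𝕜]
  [NormedAddCommGroup E] [InnerProductSpace 𝕜 E]
  [NormedAddCommGroup F] [InnerProductSpace 𝕜 F]

theorem exists_norm_le_inner_eq_of_norm_le [CompleteSpace E] [AddCommGroup M] [Module 𝕜 M]
    (A : M →ₗ[𝕜] E) (φ : M →ₗ[𝕜] 𝕜) {C : ℝ} (hC : 0 ≤ C) (h : ∀ m, ‖φ m‖ ≤ C * ‖A m‖) :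
    ∃ u : E, ‖u‖ ≤ C ∧ ∀ m, ⟪u, A m⟫_𝕜 = φ m := by
  obtain ⟨g, hgC, hg⟩ := A.exists_strongDual_comp_eq_of_norm_le φ hC h
  refine ⟨(toDual 𝕜 E).symm g, by rwa [LinearIsometryEquiv.norm_map], fun m => ?_⟩
  rw [toDual_symm_apply, hg]

namespace LinearPMap

variable {T : E →ₗ.[𝕜] F}

theorem exists_adjoint_apply_eq_neg [CompleteSpace E] (hT : Dense (T.domain : Set E))
    {a : E} {b : F} (h : ∀ x : T.domain, ⟪a, (x : E)⟫_𝕜 + ⟪b, T x⟫_𝕜 = 0) :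
    ∃ hb : b ∈ T†.domain, T† ⟨b, hb⟩ = -a := by
  have h' : ∀ x : T.domain, ⟪-a, (x : E)⟫_𝕜 = ⟪b, T x⟫_𝕜 := fun x => by
    rw [inner_neg_left]; exact add_eq_zero_iff_neg_eq.mp (h x)
  have hb : b ∈ T†.domain := mem_adjoint_domain_of_exists b ⟨-a, h'⟩
  exact ⟨hb, adjoint_apply_eq hT ⟨b, hb⟩ h'⟩

theorem norm_inner_apply_le [CompleteSpace E] (hT : Dense (T.domain : Set E))
    (u : T.domain) (w : T†.domain) : ‖⟪(w : F), T u⟫_𝕜‖ ≤ ‖(u : E)‖ * ‖T† w‖ := by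
  rw [← adjoint_isFormalAdjoint hT w u, mul_comm]
  exact norm_inner_le_norm _ _

theorem mem_graph_of_inner_adjoint_eq [CompleteSpace E] [CompleteSpace F]
    (hT : Dense (T.domain : Set E)) (hT_closed : T.IsClosed) {u : E} {v : F}
    (h : ∀ w : T†.domain, ⟪T† w, u⟫_𝕜 = ⟪(w : F), v⟫_𝕜) : (u, v) ∈ T.graph := by
  let G : Submodule 𝕜 (WithLp 2 (E × F)) :=
    T.graph.comap (WithLp.linearEquiv 2 𝕜 (E × F)).toLinearMap
  have : CompleteSpace G :=
    (hT_closed.preimage (WithLp.prod_continuous_ofLp 2 E F)).completeSpace_coe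
  suffices WithLp.toLp 2 (u, v) ∈ Gᗮᗮ by rwa [G.orthogonal_orthogonal] at this
  refine (Submodule.mem_orthogonal _ _).mpr fun z hz => ?_
  -- `z ∈ Gᗮ` means `z = (-T† w, w)` for some `w ∈ Dom T†`.
  have hz_graph : ∀ x : T.domain, ⟪z.fst, (x : E)⟫_𝕜 + ⟪z.snd, T x⟫_𝕜 = 0 := fun x => by
    simpa using (Submodule.mem_orthogonal' G z).mp hz (WithLp.toLp 2 ((x : E), T x))
      (T.mem_graph x)
  obtain ⟨hw, hTw⟩ := exists_adjoint_apply_eq_neg hT hz_graph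
  show ⟪z.fst, u⟫_𝕜 + ⟪z.snd, v⟫_𝕜 = 0
  rw [← neg_neg z.fst, ← hTw, inner_neg_left, h ⟨z.snd, hw⟩, neg_add_cancel]

theorem exists_apply_eq_of_norm_inner_le [CompleteSpace E] [CompleteSpace F]
    (hT : Dense (T.domain : Set E)) (hT_closed : T.IsClosed) {v : F} {C : ℝ} (hC : 0 ≤ C)
    (h : ∀ w : T†.domain, ‖⟪(w : F), v⟫_𝕜‖ ≤ C * ‖T† w‖) :
    ∃ u : T.domain, T u = v ∧ ‖(u : E)‖ ≤ C := by
  obtain ⟨u, huC, hu⟩ := exists_norm_le_inner_eq_of_norm_le T†.toFun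
    ((innerₛₗ 𝕜 v).comp T†.domain.subtype) hC fun w => by simpa [norm_inner_symm] using h w
  have hu' : ∀ w : T†.domain, ⟪T† w, u⟫_𝕜 = ⟪(w : F), v⟫_𝕜 := fun w => by
    rw [← inner_conj_symm, ← inner_conj_symm (w : F)]
    exact congrArg _ (hu w)
  obtain ⟨x, rfl, hx⟩ := (mem_graph_iff T).mp (mem_graph_of_inner_adjoint_eq hT hT_closed hu')
  exact ⟨x, hx, huC⟩

end LinearPMap

end

/-- (Hörmander–von Neumann solvability criterion.) For a closed densely
defined operator `T : H1 → H2` between complex Hilbert spaces and `v ∈ H2`, `v` lies in the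
image of `T` iff there is `C ≥ 0` with `|⟨u, v⟩| ≤ C ‖T† u‖` for all `u ∈ Dom T†`; moreover
in that case one can solve `T u = v` with `‖u‖ ≤ C`. -/
theorem hormander_solvability
    {H1 H2 : Type*} [NormedAddCommGroup H1] [InnerProductSpace ℂ H1] [CompleteSpace H1]
    [NormedAddCommGroup H2] [InnerProductSpace ℂ H2] [CompleteSpace H2]
    (T : H1 →ₗ.[ℂ] H2) (hTdense : Dense (T.domain : Set H1))
    (hTclosed : IsClosed (T.graph : Set (H1 × H2))) (v : H2) :
    ((∃ u : T.domain, T u = v) ↔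
      ∃ C : ℝ, 0 ≤ C ∧
        ∀ u : T.adjoint.domain, ‖(inner ℂ (u : H2) v : ℂ)‖ ≤ C * ‖T.adjoint u‖) ∧
    (∀ C : ℝ, 0 ≤ C →
      (∀ u : T.adjoint.domain, ‖(inner ℂ (u : H2) v : ℂ)‖ ≤ C * ‖T.adjoint u‖) →
      ∃ u : T.domain, T u = v ∧ ‖(u : H1)‖ ≤ C) := by
  refine ⟨⟨?_, fun ⟨C, hC, h⟩ => ?_⟩,
    fun C hC h => exists_apply_eq_of_norm_inner_le hTdense hTclosed hC h⟩
  · rintro ⟨u, rfl⟩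
    exact ⟨‖(u : H1)‖, norm_nonneg _, norm_inner_apply_le hTdense u⟩
  · obtain ⟨u, hu, -⟩ := exists_apply_eq_of_norm_inner_le hTdense hTclosed hC h
    exact ⟨u, hu⟩
end

section
/- Let 0 < ε₁ < ε₂ < ε₀ and k < n be given with ε₁ = ε₀/(100n²) and ε₂ = ε₀/(10n). Let λ₁ ≤ … ≤ λₙ be real numbers with −ε₁/(ε₂−ε₁) ≤ λ_i ≤ 1 for all i and λ_i ≥ 1 − ε₂/(ε₀−ε₁) for i ≥ k+1. Then for any p ≥ q with p + q > n + k, one has ∑_{i=1}^{p} λ_i + ∑_{j=1}^{q} λ_j − ∑_{i=1}^{n} λ_i ≥ 1/2. -/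
/-!
Split `∑_{i<p} λᵢ + ∑_{j<q} λⱼ − ∑_{i<n} λᵢ` as `∑_{i<k} λᵢ + ∑_{k≤i<q} λᵢ − ∑_{p≤i<n} λᵢ`.
With `a = ε₂/(ε₀ − ε₁)` and `b = ε₁/(ε₂ − ε₁)`, the first `k` eigenvalues are at least `−b`,
the others at least `1 − a`, and all at most `1`; since `q − k ≥ n − p + 1`, the sum is at least
`1 − n (a + b)`. For the given `ε₁, ε₂` one computes `a = 10n/(100n² − 1)` and `b = 1/(10n − 1)`,
so `n a ≤ 10/99` and `n b ≤ 1/9`.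
-/

open Finset

theorem sum_range_add_sum_range_sub_sum_range_eq {M : Type*} [AddCommGroup M] (l : ℕ → M)
    {n k p q : ℕ} (hkq : k ≤ q) (hpn : p ≤ n) :
    ∑ i ∈ range p, l i + ∑ i ∈ range q, l i - ∑ i ∈ range n, l i
      = ∑ i ∈ range k, l i + ∑ i ∈ Ico k q, l i - ∑ i ∈ Ico p n, l i := by
  rw [sum_range_add_sum_Ico l hkq, ← sum_range_add_sum_Ico l hpn]
  abel

theorem one_sub_mul_le_sum_range_add_sum_range_sub_sum_range (l : ℕ → ℝ) {n k p q : ℕ}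
    {a b : ℝ} (ha₀ : 0 ≤ a) (ha₁ : a ≤ 1) (hb : 0 ≤ b)
    (hlb : ∀ i < n, -b ≤ l i) (hub : ∀ i < n, l i ≤ 1)
    (hbig : ∀ i, k ≤ i → i < n → 1 - a ≤ l i)
    (hqp : q ≤ p) (hpn : p ≤ n) (hpq : n + k < p + q) :
    1 - n * (a + b) ≤ ∑ i ∈ range p, l i + ∑ i ∈ range q, l i - ∑ i ∈ range n, l i := by
  rw [sum_range_add_sum_range_sub_sum_range_eq l (by omega : k ≤ q) hpn]
  have hlow : k • -b ≤ ∑ i ∈ range k, l i := by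
    simpa using card_nsmul_le_sum (range k) l (-b) fun i hi => hlb i (by simp at hi; omega)
  have hmid : (q - k) • (1 - a) ≤ ∑ i ∈ Ico k q, l i := by
    simpa using card_nsmul_le_sum (Ico k q) l (1 - a) fun i hi => by
      rw [mem_Ico] at hi; exact hbig i hi.1 (by omega)
  have htop : ∑ i ∈ Ico p n, l i ≤ (n - p) • (1 : ℝ) := by
    simpa using sum_le_card_nsmul (Ico p n) l 1 fun i hi => hub i (mem_Ico.mp hi).2
  have hgap : ((n - p : ℕ) : ℝ) + 1 ≤ (q - k : ℕ) := by exact_mod_cast (by omega)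
  have hk : (k : ℝ) ≤ n := by exact_mod_cast (by omega)
  have hp : ((n - p : ℕ) : ℝ) + 1 ≤ n := by exact_mod_cast (by omega)
  simp only [nsmul_eq_mul] at hlow hmid htop
  nlinarith [mul_le_mul_of_nonneg_right hgap (sub_nonneg.mpr ha₁),
    mul_le_mul_of_nonneg_left hk hb, mul_le_mul_of_nonneg_left hp ha₀]

theorem eps_ratio_two_bounds {n ε₀ ε₁ ε₂ : ℝ} (hn : 1 ≤ n)
    (hε₁ : ε₁ = ε₀ / (100 * n ^ 2)) (hε₂ : ε₂ = ε₀ / (10 * n)) :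
    0 ≤ ε₂ / (ε₀ - ε₁) ∧ n * (ε₂ / (ε₀ - ε₁)) ≤ 10 / 99 := by
  subst hε₁ hε₂
  rcases eq_or_ne ε₀ 0 with rfl | hε₀
  · norm_num
  have hd : 0 < 100 * n ^ 2 - 1 := by nlinarith
  have h : ε₀ / (10 * n) / (ε₀ - ε₀ / (100 * n ^ 2)) = 10 * n / (100 * n ^ 2 - 1) := by
    field_simp
    ring
  rw [h, mul_div_assoc', div_le_div_iff₀ hd (by norm_num)]
  exact ⟨by positivity, by nlinarith⟩

theorem eps_ratio_one_bounds {n ε₀ ε₁ ε₂ : ℝ} (hn : 1 ≤ n)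
    (hε₁ : ε₁ = ε₀ / (100 * n ^ 2)) (hε₂ : ε₂ = ε₀ / (10 * n)) :
    0 ≤ ε₁ / (ε₂ - ε₁) ∧ n * (ε₁ / (ε₂ - ε₁)) ≤ 1 / 9 := by
  subst hε₁ hε₂
  rcases eq_or_ne ε₀ 0 with rfl | hε₀
  · norm_num
  have hd : 0 < 10 * n - 1 := by linarith
  have h : ε₀ / (100 * n ^ 2) / (ε₀ / (10 * n) - ε₀ / (100 * n ^ 2)) = 1 / (10 * n - 1) := by
    field_simp
    rw [div_eq_div_iff (by linarith) (by linarith)]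
    ring
  rw [h, mul_div_assoc', div_le_div_iff₀ hd (by norm_num)]
  exact ⟨by positivity, by nlinarith⟩

theorem curvature_eigenvalue_estimate_general
    (n k p q : ℕ) (ε₀ ε₁ ε₂ : ℝ) (l : ℕ → ℝ)
    (hε₁ : ε₁ = ε₀ / (100 * (n : ℝ) ^ 2)) (hε₂ : ε₂ = ε₀ / (10 * (n : ℝ)))
    (hlb : ∀ i < n, -ε₁ / (ε₂ - ε₁) ≤ l i)
    (hub : ∀ i < n, l i ≤ 1)
    (hbig : ∀ i, k ≤ i → i < n → 1 - ε₂ / (ε₀ - ε₁) ≤ l i)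
    (hqp : q ≤ p) (hpn : p ≤ n) (hpq : n + k < p + q) :
    (1 : ℝ) / 2 ≤ ∑ i ∈ Finset.range p, l i + ∑ i ∈ Finset.range q, l i
      - ∑ i ∈ Finset.range n, l i := by
  have hn : (1 : ℝ) ≤ n := by exact_mod_cast (by omega : 1 ≤ n)
  obtain ⟨ha₀, ha⟩ := eps_ratio_two_bounds hn hε₁ hε₂
  obtain ⟨hb₀, hb⟩ := eps_ratio_one_bounds hn hε₁ hε₂
  have ha₁ : ε₂ / (ε₀ - ε₁) ≤ 1 := by nlinarith
  calc (1 : ℝ) / 2 ≤ 1 - n * (ε₂ / (ε₀ - ε₁) + ε₁ / (ε₂ - ε₁)) := by linarith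
    _ ≤ _ := one_sub_mul_le_sum_range_add_sum_range_sub_sum_range l ha₀ ha₁ hb₀
        (fun i hi => neg_div (ε₂ - ε₁) ε₁ ▸ hlb i hi) hub hbig hqp hpn hpq

/-- Eigenvalue computation for the curvature operator on `(p,q)`-forms:
with `ε₁ = ε₀/(100n²)`, `ε₂ = ε₀/(10n)`, eigenvalues `λ₁ ≤ … ≤ λₙ` satisfying
`−ε₁/(ε₂−ε₁) ≤ λᵢ ≤ 1` and `λᵢ ≥ 1 − ε₂/(ε₀−ε₁)` for `i ≥ k+1`, one has for `p ≥ q` with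
`p + q > n + k`: `∑_{i≤p} λᵢ + ∑_{j≤q} λⱼ − ∑_{i≤n} λᵢ ≥ 1/2`. -/
theorem curvature_eigenvalue_estimate
    (n k p q : ℕ) (ε₀ ε₁ ε₂ : ℝ) (l : ℕ → ℝ)
    (hε₀ : 0 < ε₀) (hkn : k < n)
    (hε₁ : ε₁ = ε₀ / (100 * (n : ℝ) ^ 2)) (hε₂ : ε₂ = ε₀ / (10 * (n : ℝ)))
    (hmono : ∀ i j, i ≤ j → j < n → l i ≤ l j)
    (hlb : ∀ i < n, -ε₁ / (ε₂ - ε₁) ≤ l i)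
    (hub : ∀ i < n, l i ≤ 1)
    (hbig : ∀ i, k ≤ i → i < n → 1 - ε₂ / (ε₀ - ε₁) ≤ l i)
    (hqp : q ≤ p) (hpn : p ≤ n) (hpq : n + k < p + q) :
    (1 : ℝ) / 2 ≤ ∑ i ∈ Finset.range p, l i + ∑ i ∈ Finset.range q, l i
      - ∑ i ∈ Finset.range n, l i :=
  curvature_eigenvalue_estimate_general n k p q ε₀ ε₁ ε₂ l hε₁ hε₂ hlb hub hbig hqp hpn hpq
end
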